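/- In a bicategory D, suppose M is a class of 1-cells with the property: for every w : a → c in M there exist an equivalence v : b → c, a 1-cell s : b → a in M, and an invertible 2-cell α : w∘s ≅ v. Then every element of M is an equivalence. -/

import Mathlib

open CategoryTheory

universe w v u

/-- A 1-cell in a bicategory is an equivalence if it admits a pseudoinverse. -/
def IsEquiv1Cell {D : Type u} [Bicategory.{w, v} D] {a b : D} (f : a ⟶ b) : Prop :=
  ∃ g : b ⟶ a, Nonempty (f ≫ g ≅ 𝟙 a) ∧ Nonempty (g ≫ f ≅ 𝟙 b)

open Bicategory in
/-- Every element of `M` admits a pseudosection: a `j` with `j ≫ w ≅ 𝟙`. -/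
lemma exists_left_pseudoinv {D : Type u} [Bicategory.{w, v} D]
    (M : ∀ ⦃a b : D⦄, (a ⟶ b) → Prop)
    (hfac : ∀ ⦃a c : D⦄ (w : a ⟶ c), M w →
      ∃ (b : D) (v : b ⟶ c) (s : b ⟶ a), IsEquiv1Cell v ∧ M s ∧ Nonempty (s ≫ w ≅ v)) :
    ∀ ⦃a c : D⦄ (w : a ⟶ c), M w → ∃ j : c ⟶ a, Nonempty (j ≫ w ≅ 𝟙 c) := by
  intro a c w hw
  obtain ⟨b, v, s, ⟨g, ⟨η⟩, ⟨eps⟩⟩, hs, ⟨α⟩⟩ := hfac w hw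
  exact ⟨g ≫ s, ⟨associator g s w ≪≫ whiskerLeftIso g α ≪≫ eps⟩⟩

/-- If `M` is a class of 1-cells of a bicategory such that every `w : a ⟶ c` in `M`
admits an equivalence `v : b ⟶ c`, a 1-cell `s : b ⟶ a` in `M` and an invertible
2-cell `w ∘ s ≅ v`, then every element of `M` is an equivalence. -/
theorem equiv_of_locally_split_class {D : Type u} [Bicategory.{w, v} D]
    (M : ∀ ⦃a b : D⦄, (a ⟶ b) → Prop)
    (hfac : ∀ ⦃a c : D⦄ (w : a ⟶ c), M w →
      ∃ (b : D) (v : b ⟶ c) (s : b ⟶ a), IsEquiv1Cell v ∧ M s ∧ Nonempty (s ≫ w ≅ v)) :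
    ∀ ⦃a c : D⦄ (w : a ⟶ c), M w → IsEquiv1Cell w := by
  open Bicategory in
  intro a c w hw
  obtain ⟨b, v, s, ⟨g, ⟨η⟩, ⟨eps⟩⟩, hs, ⟨α⟩⟩ := hfac w hw
  -- η : v ≫ g ≅ 𝟙 b,  ε : g ≫ v ≅ 𝟙 c,  α : s ≫ w ≅ v
  obtain ⟨t, ⟨ht⟩⟩ := exists_left_pseudoinv M hfac s hs
  -- ht : t ≫ s ≅ 𝟙 a
  refine ⟨g ≫ s, ⟨?_⟩, ⟨associator g s w ≪≫ whiskerLeftIso g α ≪≫ eps⟩⟩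
  calc w ≫ g ≫ s ≅ 𝟙 a ≫ w ≫ g ≫ s := (leftUnitor _).symm
    _ ≅ (t ≫ s) ≫ w ≫ g ≫ s := whiskerRightIso ht.symm _
    _ ≅ t ≫ s ≫ w ≫ g ≫ s := associator _ _ _
    _ ≅ t ≫ s := whiskerLeftIso t
      ((associator s w (g ≫ s)).symm ≪≫ whiskerRightIso α (g ≫ s) ≪≫
        (associator v g s).symm ≪≫ whiskerRightIso η s ≪≫ leftUnitor s)
    _ ≅ 𝟙 a := ht
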